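/- Define J(X_α, X_β) = inf over f₁, f₂ ∈ G of (‖X_α∘f₁ − X_β‖ + ‖X_α − X_β∘f₂‖). Then for X_α, X_β in F₀ (in particular with all component derivatives bounded by 1 and y + H = id), ‖X_α − X_β‖_{L^∞} ≤ 2 J(X_α, X_β). -/

import Mathlib

open MeasureTheory
open scoped ENNReal NNReal

/-- A tuple of Lagrangian coordinates `X = (y, U, H, r)`. -/
structure LagTuple where
  y : ℝ → ℝ
  U : ℝ → ℝ
  H : ℝ → ℝ
  r : ℝ → ℝ

/-- Relabeling action: `X∘f = (y∘f, U∘f, H∘f, (r∘f)·f_ξ)`. -/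
noncomputable def LagTuple.comp (X : LagTuple) (f : ℝ → ℝ) : LagTuple :=
  ⟨X.y ∘ f, X.U ∘ f, X.H ∘ f, fun ξ => X.r (f ξ) * deriv f ξ⟩

/-- Membership in the relabeling group `G`. -/
def InG (f : Homeomorph ℝ ℝ) : Prop :=
  (∃ C : ℝ, ∀ x, |f x - x| ≤ C) ∧
  (∃ L : NNReal, LipschitzWith L (fun x => f x - x)) ∧
  (∃ C : ℝ, ∀ x, |f.symm x - x| ≤ C) ∧
  (∃ L : NNReal, LipschitzWith L (fun x => f.symm x - x)) ∧
  MemLp (fun x => deriv f x - 1) 2 (volume : Measure ℝ)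

/-- The `L^∞`-type distance `‖X - Y‖_{L^∞}`, with the identity subtracted in
the `y`-component. -/
noncomputable def LinfDist (X Y : LagTuple) : ℝ≥0∞ :=
  (⨆ ξ : ℝ, (‖X.y ξ - Y.y ξ‖₊ : ℝ≥0∞)) +
    (⨆ ξ : ℝ, (‖X.U ξ - Y.U ξ‖₊ : ℝ≥0∞)) +
    ⨆ ξ : ℝ, (‖X.H ξ - Y.H ξ‖₊ : ℝ≥0∞)

/-- The `E`-norm distance `‖X - Y‖_E = ‖ζ‖_V + ‖U‖_{H¹} + ‖H‖_V + ‖r‖_{L²}`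
of the difference. -/
noncomputable def ELagDist (X Y : LagTuple) : ℝ≥0∞ :=
  LinfDist X Y +
    eLpNorm (fun ξ => deriv X.y ξ - deriv Y.y ξ) 2 (volume : Measure ℝ) +
    eLpNorm (fun ξ => X.U ξ - Y.U ξ) 2 (volume : Measure ℝ) +
    eLpNorm (fun ξ => deriv X.U ξ - deriv Y.U ξ) 2 (volume : Measure ℝ) +
    eLpNorm (fun ξ => deriv X.H ξ - deriv Y.H ξ) 2 (volume : Measure ℝ) +
    eLpNorm (fun ξ => X.r ξ - Y.r ξ) 2 (volume : Measure ℝ)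

/-- `J(X_α,X_β) = inf_{f₁,f₂ ∈ G} (‖X_α∘f₁ - X_β‖ + ‖X_α - X_β∘f₂‖)`. -/
noncomputable def Jdist (Xα Xβ : LagTuple) : ℝ≥0∞ :=
  ⨅ (f₁ : Homeomorph ℝ ℝ) (_ : InG f₁) (f₂ : Homeomorph ℝ ℝ) (_ : InG f₂),
    (ELagDist (Xα.comp f₁) Xβ + ELagDist Xα (Xβ.comp f₂))

/-- Membership in the section `F₀`: `y + H = id`, `0 ≤ y_ξ, H_ξ ≤ 1`,
`|U_ξ| ≤ 1` and the energy identity hold. -/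
def InF0 (X : LagTuple) : Prop :=
  (∀ ξ, X.y ξ + X.H ξ = ξ) ∧
  LipschitzWith 1 X.y ∧ LipschitzWith 1 X.U ∧ LipschitzWith 1 X.H ∧
  (∀ᵐ ξ : ℝ, 0 ≤ deriv X.y ξ ∧ deriv X.y ξ ≤ 1) ∧
  (∀ᵐ ξ : ℝ, 0 ≤ deriv X.H ξ ∧ deriv X.H ξ ≤ 1) ∧
  (∀ᵐ ξ : ℝ, |deriv X.U ξ| ≤ 1) ∧
  ∀ᵐ ξ : ℝ, deriv X.y ξ * deriv X.H ξ =
    (deriv X.y ξ)^2 * (X.U ξ)^2 + (deriv X.U ξ)^2 + (X.r ξ)^2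

/-! Since `y + H = id`, the displacement `|f ξ - ξ|` of a relabeling `f` is bounded by
`‖X∘f - Z‖_{L^∞}`. Components of `X` are `1`-Lipschitz, so `‖X - X∘f‖_{L^∞} ≤ 3‖X∘f - Z‖_{L^∞}`
and hence `‖X - Z‖_{L^∞} ≤ 4‖X∘f - Z‖_{L^∞} ≤ 4‖X∘f - Z‖`. Applying this to `(X_α, X_β, f₁)`
and `(X_β, X_α, f₂)` and averaging gives `‖X_α - X_β‖_{L^∞} ≤ 2(‖X_α∘f₁ - X_β‖ + ‖X_α - X_β∘f₂‖)`
for every pair of relabelings. -/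

noncomputable def supEdist (F G : ℝ → ℝ) : ℝ≥0∞ :=
  ⨆ ξ, edist (F ξ) (G ξ)

lemma edist_le_supEdist (F G : ℝ → ℝ) (ξ : ℝ) : edist (F ξ) (G ξ) ≤ supEdist F G :=
  le_iSup (fun ξ => edist (F ξ) (G ξ)) ξ

lemma supEdist_comm (F G : ℝ → ℝ) : supEdist F G = supEdist G F := by
  simp only [supEdist, edist_comm]

lemma supEdist_le_add_supEdist_comp {F : ℝ → ℝ} (hF : LipschitzWith 1 F) (G g : ℝ → ℝ)
    {D : ℝ≥0∞} (hD : ∀ ξ, edist ξ (g ξ) ≤ D) :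
    supEdist F G ≤ D + supEdist (F ∘ g) G :=
  iSup_le fun ξ =>
    calc edist (F ξ) (G ξ) ≤ edist (F ξ) (F (g ξ)) + edist (F (g ξ)) (G ξ) :=
          edist_triangle _ _ _
      _ ≤ D + supEdist (F ∘ g) G := by
          gcongr
          · exact (hF.edist_le_mul ξ (g ξ)).trans (by simpa using hD ξ)
          · exact edist_le_supEdist (F ∘ g) G ξ

namespace LagTuple

lemma linfDist_eq_supEdist (X Y : LagTuple) :
    LinfDist X Y = supEdist X.y Y.y + supEdist X.U Y.U + supEdist X.H Y.H :=
  rfl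

lemma linfDist_comm (X Y : LagTuple) : LinfDist X Y = LinfDist Y X := by
  simp only [linfDist_eq_supEdist, supEdist_comm X.y, supEdist_comm X.U, supEdist_comm X.H]

lemma linfDist_le_eLagDist (X Y : LagTuple) : LinfDist X Y ≤ ELagDist X Y := by
  unfold ELagDist
  iterate 5 refine le_add_right ?_
  exact le_rfl

lemma edist_le_supEdist_comp_y_add_H {X Z : LagTuple} (hX : ∀ ξ, X.y ξ + X.H ξ = ξ)
    (hZ : ∀ ξ, Z.y ξ + Z.H ξ = ξ) (g : ℝ → ℝ) (ξ : ℝ) :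
    edist ξ (g ξ) ≤ supEdist (X.y ∘ g) Z.y + supEdist (X.H ∘ g) Z.H := by
  rw [edist_comm]
  calc edist (g ξ) ξ = edist (X.y (g ξ) + X.H (g ξ)) (Z.y ξ + Z.H ξ) := by rw [hX, hZ]
    _ ≤ edist (X.y (g ξ)) (Z.y ξ) + edist (X.H (g ξ)) (Z.H ξ) := edist_add_add_le _ _ _ _
    _ ≤ _ := add_le_add (edist_le_supEdist (X.y ∘ g) Z.y ξ) (edist_le_supEdist (X.H ∘ g) Z.H ξ)

lemma linfDist_le_four_mul_linfDist_comp {X Z : LagTuple} (hX : ∀ ξ, X.y ξ + X.H ξ = ξ)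
    (hZ : ∀ ξ, Z.y ξ + Z.H ξ = ξ) (hy : LipschitzWith 1 X.y) (hU : LipschitzWith 1 X.U)
    (hH : LipschitzWith 1 X.H) (g : ℝ → ℝ) :
    LinfDist X Z ≤ 4 * LinfDist (X.comp g) Z := by
  set Y := supEdist (X.y ∘ g) Z.y
  set U := supEdist (X.U ∘ g) Z.U
  set H := supEdist (X.H ∘ g) Z.H
  have hD := edist_le_supEdist_comp_y_add_H hX hZ g
  calc LinfDist X Z ≤ (Y + H + Y) + (Y + H + U) + (Y + H + H) := by
        rw [linfDist_eq_supEdist]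
        gcongr <;> apply supEdist_le_add_supEdist_comp <;> assumption
    _ ≤ 4 * (Y + U + H) := by
        calc _ = 3 * (Y + H) + (Y + U + H) := by ring
          _ ≤ 3 * (Y + U + H) + (Y + U + H) := by gcongr; exact le_self_add
          _ = _ := by ring
    _ = 4 * LinfDist (X.comp g) Z := rfl

end LagTuple

open LagTuple in
/-- For `X_α, X_β ∈ F₀`, `‖X_α - X_β‖_{L^∞} ≤ 2 J(X_α, X_β)`. -/
theorem Linf_le_two_J (Xα Xβ : LagTuple) (hα : InF0 Xα) (hβ : InF0 Xβ) :
    LinfDist Xα Xβ ≤ 2 * Jdist Xα Xβ := by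
  obtain ⟨hidα, hyα, hUα, hHα, -⟩ := hα
  obtain ⟨hidβ, hyβ, hUβ, hHβ, -⟩ := hβ
  rw [mul_comm, ← ENNReal.div_le_iff two_ne_zero ENNReal.ofNat_ne_top]
  refine le_iInf fun f₁ => le_iInf fun _ => le_iInf fun f₂ => le_iInf fun _ => ?_
  rw [ENNReal.div_le_iff two_ne_zero ENNReal.ofNat_ne_top, ← ENNReal.mul_le_mul_iff_right
    two_ne_zero ENNReal.ofNat_ne_top]
  have h₁ : LinfDist Xα Xβ ≤ 4 * ELagDist (Xα.comp f₁) Xβ :=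
    (linfDist_le_four_mul_linfDist_comp hidα hidβ hyα hUα hHα f₁).trans
      (by gcongr; exact linfDist_le_eLagDist _ _)
  have h₂ : LinfDist Xα Xβ ≤ 4 * ELagDist Xα (Xβ.comp f₂) := by
    rw [linfDist_comm]
    refine (linfDist_le_four_mul_linfDist_comp hidβ hidα hyβ hUβ hHβ f₂).trans ?_
    rw [linfDist_comm]
    gcongr
    exact linfDist_le_eLagDist _ _
  calc 2 * LinfDist Xα Xβ = LinfDist Xα Xβ + LinfDist Xα Xβ := two_mul _
    _ ≤ 4 * ELagDist (Xα.comp f₁) Xβ + 4 * ELagDist Xα (Xβ.comp f₂) := add_le_add h₁ h₂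
    _ = 2 * ((ELagDist (Xα.comp f₁) Xβ + ELagDist Xα (Xβ.comp f₂)) * 2) := by ring
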